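/- arXiv:1408.1754 — 8 statements merged into one kernel-verified Lean document; each statement's English description precedes it below -/
import Mathlib

section
/- Soundness of the normalization (shortest-path) rule: if (β, arr) satisfies Ψ, then (β, arr) also satisfies the strengthened matrix Ψ' defined by Ψ' i j = Ψ i j ∩ ⋂_{k : I} (Ψ i k ∪ Ψ k j). In particular, any property that holds over both segments [β i, β k) and [β k, β j) holds over the segment [β i, β j). -/
/-- `(β, arr)` satisfies the segment matrix `Ψ`: for all indices `i j` and all
integers `ℓ` with `β i ≤ ℓ < β j`, the array value `arr ℓ` satisfies `Ψ i j`. -/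
def Sat {I α : Type*} (β : I → ℤ) (arr : ℤ → α) (Ψ : I → I → Set α) : Prop :=
  ∀ i j : I, ∀ ℓ : ℤ, β i ≤ ℓ → ℓ < β j → arr ℓ ∈ Ψ i j

/-- Soundness of the normalization (shortest-path) rule. -/
theorem sat_normalize {I α : Type*} (β : I → ℤ) (arr : ℤ → α) (Ψ : I → I → Set α)
    (h : Sat β arr Ψ) :
    Sat β arr (fun i j => Ψ i j ∩ ⋂ k : I, (Ψ i k ∪ Ψ k j)) := by
  intro i j ℓ h1 h2
  refine ⟨h i j ℓ h1 h2, Set.mem_iInter.2 fun k => ?_⟩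
  rcases lt_or_ge ℓ (β k) with hk | hk
  · exact Or.inl (h i k ℓ h1 hk)
  · exact Or.inr (h k j ℓ hk h2)
end

section
/- Soundness of the array-write transfer function (strong and weak updates): fix i : I and a value c : α, and let arr' = Function.update arr (β i) c. Define Ψ' by: Ψ' p q = {c} if β p = β i and β q = β i + 1 (strong update of the singleton segment); Ψ' p q = Ψ p q if β q ≤ β i or β i < β p (segments that cannot contain the written index); and Ψ' p q = Ψ p q ∪ {c} otherwise (weak update). Then Sat β arr Ψ implies Sat β arr' Ψ'. -/
/-- Soundness of the array-write transfer function (strong and weak updates). -/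
theorem sat_array_write {I α : Type*} (β : I → ℤ) (arr : ℤ → α) (Ψ : I → I → Set α)
    (i : I) (c : α) (h : Sat β arr Ψ) :
    Sat β (Function.update arr (β i) c)
      (fun p q =>
        if β p = β i ∧ β q = β i + 1 then {c}
        else if β q ≤ β i ∨ β i < β p then Ψ p q
        else Ψ p q ∪ {c}) := by
  intro p q ℓ h1 h2
  simp only [Function.update_apply]
  split_ifs <;>
    first
      | exact Set.mem_singleton c
      | exact h p q ℓ h1 h2
      | exact Set.mem_union_left _ (h p q ℓ h1 h2)
      | exact Set.mem_union_right _ rfl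
      | omega
end

section
/- Soundness of the array-read transfer function: fix i : I and define Ψ' by Ψ' p q = Ψ p q ∩ {arr (β i)} if β p = β i and β q = β i + 1, and Ψ' p q = Ψ p q otherwise. Then Sat β arr Ψ implies Sat β arr Ψ'; that is, after reading x = A[i], the singleton segment at i may be strengthened with the constraint that its content equals the value read. -/
/-- Soundness of the array-read transfer function: after reading `x = A[i]`, the
singleton segment at `i` may be strengthened with the constraint that its content
equals the value read. -/
theorem sat_array_read {I α : Type*} (β : I → ℤ) (arr : ℤ → α) (Ψ : I → I → Set α)
    (i : I) (h : Sat β arr Ψ) :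
    Sat β arr
      (fun p q =>
        if β p = β i ∧ β q = β i + 1 then Ψ p q ∩ {arr (β i)}
        else Ψ p q) := by
  intro p q ℓ h1 h2
  by_cases hc : β p = β i ∧ β q = β i + 1
  · simp only [if_pos hc]
    refine ⟨h p q ℓ h1 h2, ?_⟩
    have : ℓ = β i := by omega
    simp [this]
  · simp only [if_neg hc]
    exact h p q ℓ h1 h2
end

section
/- Soundness of normalization rule 2 (pushing scalar properties into segments): let Φ : Set (V → ℤ) be a set of scalar states with σ ∈ Φ. If (σ, arr) satisfies Ψ, then (σ, arr) satisfies the matrix Ψ' defined by Ψ' p q = Ψ p q ∩ {pr | pr.1 ∈ Φ ∧ pr.1 p < pr.1 q}; that is, each segment property may be strengthened with the scalar invariant Φ and with the non-emptiness constraint p < q of its own segment. -/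
/-- `(σ, arr)` satisfies the relational segment matrix `Ψ`. -/
def SatR {V α : Type*} (σ : V → ℤ) (arr : ℤ → α) (Ψ : V → V → Set ((V → ℤ) × α)) : Prop :=
  ∀ p q : V, ∀ ℓ : ℤ, σ p ≤ ℓ → ℓ < σ q → (σ, arr ℓ) ∈ Ψ p q

/-- Soundness of normalization rule 2: pushing scalar properties into segments. -/
theorem satR_push_scalar {V α : Type*} (σ : V → ℤ) (arr : ℤ → α)
    (Ψ : V → V → Set ((V → ℤ) × α)) (Φ : Set (V → ℤ)) (hσ : σ ∈ Φ)
    (h : SatR σ arr Ψ) :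
    SatR σ arr (fun p q => Ψ p q ∩ {pr | pr.1 ∈ Φ ∧ pr.1 p < pr.1 q}) := by
  intro p q ℓ h1 h2
  exact ⟨h p q ℓ h1 h2, hσ, lt_of_le_of_lt h1 h2⟩
end

section
/- Soundness of normalization rule 3 (lifting segment properties to the scalar domain): if (σ, arr) satisfies Ψ and σ i < σ j for some i j : V, then σ belongs to the projection Prod.fst '' (Ψ i j); that is, for every non-empty segment, the scalar state satisfies the scalar consequences (existential projection over the content variables) of that segment's property. -/
/-- Soundness of normalization rule 3: lifting segment properties of non-empty
segments to the scalar domain. -/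
theorem satR_lift_scalar {V α : Type*} (σ : V → ℤ) (arr : ℤ → α)
    (Ψ : V → V → Set ((V → ℤ) × α)) (h : SatR σ arr Ψ) (i j : V) (hij : σ i < σ j) :
    σ ∈ Prod.fst '' (Ψ i j) := by
  exact ⟨(σ, arr (σ i)), h i j (σ i) le_rfl hij, rfl⟩
end

section
/- Termination of the shortest-path fixed point computation for pointwise lattices of bound functions (abstract form of the octagon termination theorem): let D be a finite type, α a linear order, and n : ℕ. There is no function s : ℕ → Fin n → (D → α) such that for every t : ℕ, s (t+1) ≠ s t and there exist indices i j k : Fin n with s (t+1) i = s t i ⊓ ((s t i ⊓ s t j) ⊔ (s t i ⊓ s t k)) and s (t+1) m = s t m for all m ≠ i. In other words, every run of the rewrite system xᵢ ← xᵢ ⊓ ((xᵢ ⊓ xⱼ) ⊔ (xᵢ ⊓ xₖ)) that performs a strict change at each step is finite. -/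
/-- Termination of the shortest-path fixed point computation for pointwise lattices
of bound functions: there is no infinite run of the rewrite system
`xᵢ ← xᵢ ⊓ ((xᵢ ⊓ xⱼ) ⊔ (xᵢ ⊓ xₖ))` that strictly changes the state at every step. -/
theorem shortest_path_terminates {D α : Type*} [Fintype D] [LinearOrder α] (n : ℕ) :
    ¬ ∃ s : ℕ → Fin n → (D → α), ∀ t : ℕ,
        s (t + 1) ≠ s t ∧
        ∃ i j k : Fin n,
          s (t + 1) i = s t i ⊓ ((s t i ⊓ s t j) ⊔ (s t i ⊓ s t k)) ∧
          ∀ m : Fin n, m ≠ i → s (t + 1) m = s t m := by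
  rintro ⟨s, hs⟩
  -- The set of all values appearing in the initial state.
  set S : Set α := Set.range (fun p : Fin n × D => s 0 p.1 p.2) with hSdef
  have hSfin : S.Finite := Set.finite_range _
  -- All values of all states stay in S.
  have hmem : ∀ t (m : Fin n) (d : D), s t m d ∈ S := by
    intro t
    induction t with
    | zero => intro m d; exact ⟨(m, d), rfl⟩
    | succ t ih =>
      intro m d
      obtain ⟨_, i, j, k, hi, hother⟩ := hs t
      by_cases hmi : m = i
      · subst hmi
        rw [hi]
        have hval : s (t + 1) m d =
            min (s t m d) (max (min (s t m d) (s t j d)) (min (s t m d) (s t k d))) := by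
          rw [hi]; rfl
        rw [← hi, hval]
        rcases min_choice (s t m d)
            (max (min (s t m d) (s t j d)) (min (s t m d) (s t k d))) with h | h
        · rw [h]; exact ih m d
        · rw [h]
          rcases max_choice (min (s t m d) (s t j d)) (min (s t m d) (s t k d)) with h2 | h2
          · rw [h2]
            rcases min_choice (s t m d) (s t j d) with h3 | h3 <;> rw [h3]
            exacts [ih m d, ih j d]
          · rw [h2]
            rcases min_choice (s t m d) (s t k d) with h3 | h3 <;> rw [h3]
            exacts [ih m d, ih k d]
      · rw [hother m hmi]; exact ih m d
  -- The run is strictly decreasing.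
  have hanti : StrictAnti s := by
    refine strictAnti_nat_of_succ_lt (fun t => ?_)
    obtain ⟨hne, i, j, k, hi, hother⟩ := hs t
    refine lt_of_le_of_ne ?_ hne
    intro m
    by_cases hmi : m = i
    · subst hmi; rw [hi]; exact inf_le_left
    · rw [hother m hmi]
  -- So s is injective into a finite set of states: contradiction.
  have hinj : Function.Injective s := hanti.injective
  have hsub : Set.range s ⊆ {f : Fin n → D → α | ∀ m d, f m d ∈ S} := by
    rintro _ ⟨t, rfl⟩ m d
    exact hmem t m d
  have hfin : ({f : Fin n → D → α | ∀ m d, f m d ∈ S}).Finite := by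
    have : {f : Fin n → D → α | ∀ m d, f m d ∈ S} ⊆
        Set.pi Set.univ (fun _ : Fin n => {g : D → α | ∀ d, g d ∈ S}) := by
      intro f hf m _
      exact hf m
    refine Set.Finite.subset (Set.Finite.pi (fun _ => ?_)) this
    have : {g : D → α | ∀ d, g d ∈ S} ⊆ Set.pi Set.univ (fun _ : D => S) := by
      intro g hg d _; exact hg d
    exact Set.Finite.subset (Set.Finite.pi (fun _ => hSfin)) this
  exact (Set.infinite_range_of_injective hinj) (hfin.subset hsub)
end

section
/- Variable elimination (projection) for generated polyhedra: let V be a finite type, E = V → ℝ, v : V, and P, R ⊆ E. Writing e_v = Pi.single v (1 : ℝ) and L for the underlying set of the ℝ-linear span of {e_v}, one has (convexHull ℝ P + cone R) + L = convexHull ℝ P + cone (R ∪ {e_v, -e_v}); that is, existentially quantifying the coordinate v of a polyhedron generated by points P and rays R yields the polyhedron generated by the same points P and rays R together with the unit rays in the direction of v. -/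
open scoped NNReal Pointwise

/-- The convex cone generated by `R`: the underlying set of the `ℝ≥0`-submodule
span of `R`. -/
def cone {E : Type*} [AddCommGroup E] [Module ℝ E] (R : Set E) : Set E :=
  (Submodule.span ℝ≥0 R : Submodule ℝ≥0 E)

section
variable {E : Type*} [AddCommGroup E] [Module ℝ E]

lemma cone_union (A B : Set E) : cone (A ∪ B) = cone A + cone B := by
  simp only [cone, Submodule.span_union, Submodule.coe_sup]

lemma real_smul_eq_toNNReal_smul_add (c : ℝ) (x : E) :
    c • x = c.toNNReal • x + (-c).toNNReal • -x := by
  rw [NNReal.smul_def, NNReal.smul_def, Real.coe_toNNReal', Real.coe_toNNReal', smul_neg,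
    ← sub_eq_add_neg, ← sub_smul, max_zero_sub_max_neg_zero_eq_self]

/-- Being closed under negation, `cone (s ∪ -s)` is closed under all real scalars. -/
lemma cone_union_neg (s : Set E) : cone (s ∪ -s) = (Submodule.span ℝ s : Set E) := by
  set K := Submodule.span ℝ≥0 (s ∪ -s)
  have neg_K : -K = K := by
    rw [← Submodule.span_neg_eq_neg, Set.union_neg, neg_neg, Set.union_comm]
  let L : Submodule ℝ E :=
    { K.toAddSubmonoid with
      smul_mem' := fun c x hx => by
        rw [real_smul_eq_toNNReal_smul_add]
        exact K.add_mem (K.smul_mem _ hx)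
          (K.smul_mem _ (by rwa [← Submodule.mem_neg, neg_K])) }
  apply subset_antisymm
  · show K ≤ (Submodule.span ℝ s).restrictScalars ℝ≥0
    refine Submodule.span_le.2 (Set.union_subset Submodule.subset_span fun x hx => ?_)
    simpa using (Submodule.span ℝ s).neg_mem (Submodule.subset_span hx)
  · exact (Submodule.span_le (p := L)).2 fun x hx => Submodule.subset_span (Or.inl hx)

lemma cone_pair_neg (e : E) : cone {e, -e} = (Submodule.span ℝ {e} : Set E) := by
  rw [← cone_union_neg, Set.neg_singleton, Set.insert_eq]
end

theorem project_generators_general {V : Type*} [DecidableEq V] (v : V)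
    (P R : Set (V → ℝ)) :
    (convexHull ℝ P + cone R) + ((Submodule.span ℝ ({Pi.single v (1 : ℝ)} : Set (V → ℝ)) : Submodule ℝ (V → ℝ)) : Set (V → ℝ)) =
      convexHull ℝ P + cone (R ∪ {Pi.single v (1 : ℝ), -Pi.single v (1 : ℝ)}) := by
  rw [cone_union, cone_pair_neg, add_assoc]

/-- Variable elimination (projection) for generated polyhedra: existentially
quantifying the coordinate `v` of a polyhedron generated by points `P` and rays `R`
yields the polyhedron generated by the same points `P` and rays `R` together with
the unit rays in the direction of `v`. -/
theorem project_generators {V : Type*} [Fintype V] [DecidableEq V] (v : V)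
    (P R : Set (V → ℝ)) :
    (convexHull ℝ P + cone R) + ((Submodule.span ℝ ({Pi.single v (1 : ℝ)} : Set (V → ℝ)) : Submodule ℝ (V → ℝ)) : Set (V → ℝ)) =
      convexHull ℝ P + cone (R ∪ {Pi.single v (1 : ℝ), -Pi.single v (1 : ℝ)}) :=
  project_generators_general v P R
end

section
/- Non-termination of the unguarded rewrite system on convex sets: there exist nonempty compact convex sets A₀, B₀, C in ℝ × ℝ such that, defining recursively B_{n+1} = B_n ∩ convexHull ℝ (A_n ∪ C) and A_{n+1} = A_n ∩ convexHull ℝ (B_{n+1} ∪ C), one has A_{n+1} ≠ A_n and B_{n+1} ≠ B_n for every n : ℕ; that is, the descending iteration enforcing A ⊑ B ⊔ C and B ⊑ A ⊔ C strictly decreases forever and never reaches a fixed point. -/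
/-!
Take `C = {0} × [-3, 3]` and horizontal segments `A = [-d, 0] × {-1}`, `B = [-e, 0] × {1}`.
At height `±1` the convex hull of `C` and the segment at the opposite height `∓1` is cut out
by the line through `(-d, ∓1)` and `(0, ±3)`, so it is `[-d/2, 0] × {±1}`: each rewrite step
halves the length of the segment it acts on. Starting from `d = 1`, `e = 2`, the rewrites produce
`B n = [-2 · 4⁻ⁿ, 0] × {1}` and `A n = [-4⁻ⁿ, 0] × {-1}`, which shrink forever.
-/

open Set

lemma convexHull_Icc_prod_union_subset {d ε : ℝ} (hd : 0 ≤ d) (hε : ε = 1 ∨ ε = -1) :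
    convexHull ℝ (Icc (-d) 0 ×ˢ {-ε} ∪ {0} ×ˢ Icc (-3) 3) ⊆
      {p : ℝ × ℝ | 0 ≤ 4 * p.1 + 3 * d - d * ε * p.2} := by
  refine convexHull_min ?_ ?_
  · rintro ⟨x, y⟩ (⟨⟨hx, -⟩, hy⟩ | ⟨hx, hy⟩)
    · simp only [mem_singleton_iff] at hy
      simp only [mem_ofPred_eq, hy]
      rcases hε with rfl | rfl <;> linarith
    · simp only [mem_singleton_iff] at hx
      simp only [mem_ofPred_eq, hx]
      rcases hε with rfl | rfl <;> nlinarith [hy.1, hy.2]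
  · intro p hp q hq a b ha hb hab
    simp only [mem_ofPred_eq, Prod.fst_add, Prod.snd_add, Prod.smul_fst, Prod.smul_snd,
      smul_eq_mul] at hp hq ⊢
    nlinarith

lemma Icc_prod_inter_convexHull_Icc_prod_union {d e ε : ℝ} (hd : 0 ≤ d) (hde : d / 2 ≤ e)
    (hε : ε = 1 ∨ ε = -1) :
    Icc (-e) 0 ×ˢ {ε} ∩ convexHull ℝ (Icc (-d) 0 ×ˢ {-ε} ∪ {0} ×ˢ Icc (-3) 3) =
      Icc (-(d / 2)) 0 ×ˢ {ε} := by
  ext ⟨x, y⟩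
  simp only [mem_inter_iff, mem_prod, mem_Icc, mem_singleton_iff]
  constructor
  · rintro ⟨⟨⟨-, hx⟩, hy⟩, hmem⟩
    rw [hy] at hmem
    have hline : 0 ≤ 4 * x + 3 * d - d * ε * ε := convexHull_Icc_prod_union_subset hd hε hmem
    refine ⟨⟨?_, hx⟩, hy⟩
    rcases hε with rfl | rfl <;> linarith
  · rintro ⟨⟨hx, hx'⟩, hy⟩
    refine ⟨⟨⟨by linarith, hx'⟩, hy⟩, ?_⟩
    rw [hy]
    have hA : (2 * x, -ε) ∈ Icc (-d) 0 ×ˢ {-ε} ∪ {0} ×ˢ Icc (-3) 3 :=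
      Or.inl ⟨⟨by linarith, by linarith⟩, rfl⟩
    have hC : (0, 3 * ε) ∈ Icc (-d) 0 ×ˢ {-ε} ∪ {0} ×ˢ Icc (-3) 3 :=
      Or.inr ⟨rfl, by rcases hε with rfl | rfl <;> norm_num⟩
    have hmid : (x, ε) = (1 / 2 : ℝ) • (2 * x, -ε) + (1 / 2 : ℝ) • ((0 : ℝ), 3 * ε) := by
      ext <;> simp only [Prod.fst_add, Prod.snd_add, Prod.smul_fst, Prod.smul_snd, smul_eq_mul] <;>
        ring
    rw [hmid]
    exact convex_convexHull ℝ _ (subset_convexHull ℝ _ hA) (subset_convexHull ℝ _ hC)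
      (by norm_num) (by norm_num) (by norm_num)

lemma Icc_prod_singleton_ne_of_lt {a b y : ℝ} (ha : 0 ≤ a) (hab : a < b) :
    Icc (-a) 0 ×ˢ {y} ≠ Icc (-b) 0 ×ˢ {y} := by
  intro h
  have hmem : ((-b, y) : ℝ × ℝ) ∈ Icc (-a) 0 ×ˢ {y} :=
    h ▸ ⟨⟨le_rfl, by linarith⟩, rfl⟩
  exact absurd hmem.1.1 (by linarith)

/-- Non-termination of the unguarded rewrite system on convex sets: there are
nonempty compact convex sets `A₀, B₀, C` in `ℝ × ℝ` for which the descending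
iteration enforcing `A ⊑ B ⊔ C` and `B ⊑ A ⊔ C` (with join given by the convex
hull of the union and meet by intersection) strictly decreases forever. -/
theorem unguarded_rewrite_diverges :
    ∃ (A B : ℕ → Set (ℝ × ℝ)) (C : Set (ℝ × ℝ)),
      (A 0).Nonempty ∧ IsCompact (A 0) ∧ Convex ℝ (A 0) ∧
      (B 0).Nonempty ∧ IsCompact (B 0) ∧ Convex ℝ (B 0) ∧
      C.Nonempty ∧ IsCompact C ∧ Convex ℝ C ∧
      (∀ n : ℕ, B (n + 1) = B n ∩ convexHull ℝ (A n ∪ C)) ∧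
      (∀ n : ℕ, A (n + 1) = A n ∩ convexHull ℝ (B (n + 1) ∪ C)) ∧
      (∀ n : ℕ, A (n + 1) ≠ A n ∧ B (n + 1) ≠ B n) := by
  have hpos (n : ℕ) : (0 : ℝ) < 4⁻¹ ^ n := by positivity
  have hdecr (n : ℕ) : (4⁻¹ : ℝ) ^ (n + 1) < 4⁻¹ ^ n := by
    rw [pow_succ]; linarith [hpos n]
  refine ⟨fun n => Icc (-(4⁻¹ ^ n)) 0 ×ˢ {-1}, fun n => Icc (-(2 * 4⁻¹ ^ n)) 0 ×ˢ {1},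
    {0} ×ˢ Icc (-3) 3,
    (nonempty_Icc.2 (by norm_num)).prod (singleton_nonempty _),
    isCompact_Icc.prod isCompact_singleton, (convex_Icc _ _).prod (convex_singleton _),
    (nonempty_Icc.2 (by norm_num)).prod (singleton_nonempty _),
    isCompact_Icc.prod isCompact_singleton, (convex_Icc _ _).prod (convex_singleton _),
    (singleton_nonempty _).prod (nonempty_Icc.2 (by norm_num)),
    isCompact_singleton.prod isCompact_Icc, (convex_singleton _).prod (convex_Icc _ _),
    fun n => ?_, fun n => ?_, fun n => ⟨?_, ?_⟩⟩
  · have hhalf : (2 : ℝ) * 4⁻¹ ^ (n + 1) = 4⁻¹ ^ n / 2 := by ring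
    beta_reduce
    rw [hhalf, Icc_prod_inter_convexHull_Icc_prod_union (hpos n).le (by linarith [hpos n])
      (Or.inl rfl)]
  · have hstep := Icc_prod_inter_convexHull_Icc_prod_union (d := 2 * 4⁻¹ ^ (n + 1))
      (e := 4⁻¹ ^ n) (ε := -1) (by positivity) (by linarith [hdecr n]) (Or.inr rfl)
    rw [neg_neg] at hstep
    beta_reduce
    rw [hstep, mul_div_cancel_left₀ _ two_ne_zero]
  · exact Icc_prod_singleton_ne_of_lt (hpos _).le (hdecr n)
  · exact Icc_prod_singleton_ne_of_lt (by positivity) (by linarith [hdecr n])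
end
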